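/- arXiv:2507.02343 — 9 statements merged into one kernel-verified Lean document; each statement's English description precedes it below -/
import Mathlib

section
/- (Compactness for Normal amst I, (1)⇔(2)) Let (M, ⊨, P(L)) be a normal abstract model structure such that L is not finitely satisfiable, with induced consequence relation ⊢. Then the amst is compact if and only if every finitely satisfiable set Γ ⊆ L is contained in a ⊢-nontrivial maximal finitely satisfiable set (a set Σ ⊇ Γ that is ⊢-nontrivial, finitely satisfiable, and such that no proper superset of Σ is finitely satisfiable). -/
/-- A set `Γ ⊆ L` is satisfiable in the abstract model structure `(M, R, 𝒫(L))`
if some `m : M` satisfies it. -/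
def AmstSat {M L : Type*} (R : M → Set L → Prop) (Γ : Set L) : Prop :=
  ∃ m : M, R m Γ

/-- `Γ` is finitely satisfiable: every finite subset of `Γ` is satisfiable. -/
def AmstFinSat {M L : Type*} (R : M → Set L → Prop) (Γ : Set L) : Prop :=
  ∀ Γ₀ : Set L, Γ₀ ⊆ Γ → Γ₀.Finite → AmstSat R Γ₀

/-- The abstract model structure is normal. -/
def AmstNormal {M L : Type*} (R : M → Set L → Prop) : Prop :=
  ∀ (m : M) (Γ : Set L), R m Γ ↔ ∀ α ∈ Γ, R m {α}

/-- `Mod(Γ)`, the set of models of `Γ`. -/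
def AmstMod {M L : Type*} (R : M → Set L → Prop) (Γ : Set L) : Set M :=
  {m | R m Γ}

/-- The induced consequence relation: `Γ ⊢ α` iff `Mod(Γ) ⊆ Mod({α})`. -/
def AmstTurn {M L : Type*} (R : M → Set L → Prop) (Γ : Set L) (α : L) : Prop :=
  AmstMod R Γ ⊆ AmstMod R {α}

/-- The abstract model structure is compact. -/
def AmstCompact {M L : Type*} (R : M → Set L → Prop) : Prop :=
  ∀ Γ : Set L, AmstSat R Γ ↔ AmstFinSat R Γ

/-- `Γ` is `⊢`-trivial: `Γ ⊢ α` for every `α`. -/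
def AmstTrivial {M L : Type*} (R : M → Set L → Prop) (Γ : Set L) : Prop :=
  ∀ α : L, AmstTurn R Γ α

/-- `Th(X)`, the theory of a set `X` of models. -/
def AmstTh {M L : Type*} (R : M → Set L → Prop) (X : Set M) : Set L :=
  {α | ∀ m ∈ X, R m {α}}

/-- The subbase `{M \ Mod({α}) | α ∈ L}` generating the topology `τ_N`. -/
def tauN {M L : Type*} (R : M → Set L → Prop) : TopologicalSpace M :=
  TopologicalSpace.generateFrom {U | ∃ α : L, U = (AmstMod R {α})ᶜ}

/-- The topology `τ_C` generated by the collection `{Mod(Γ) | Γ ⊆ L}`. -/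
def tauC {M L : Type*} (R : M → Set L → Prop) : TopologicalSpace M :=
  TopologicalSpace.generateFrom {U | ∃ Γ : Set L, U = AmstMod R Γ}

/-- `u` is a `𝒰`-ultramodel of the sequence `m` in the topological space `(M, t)`. -/
def Ultramodel {M I : Type*} (t : TopologicalSpace M) (m : I → M)
    (𝒰 : Ultrafilter I) (u : M) : Prop :=
  ∀ V : Set M, t.IsOpen V → u ∈ V → {i | m i ∈ V} ∈ 𝒰

section
variable {M L : Type*} (R : M → Set L → Prop)

private lemma amst_sat_mono (hN : AmstNormal R) {m : M} {Γ Δ : Set L}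
    (h : R m Γ) (hsub : Δ ⊆ Γ) : R m Δ := by
  rw [hN] at h ⊢
  exact fun α hα => h α (hsub hα)

private lemma chain_finite_subset {c : Set (Set L)} (hc : IsChain (· ⊆ ·) c)
    (hne : c.Nonempty) {Γ₀ : Set L} (hfin : Γ₀.Finite) (hsub : Γ₀ ⊆ ⋃₀ c) :
    ∃ t ∈ c, Γ₀ ⊆ t := by
  refine Set.Finite.induction_on (motive := fun s _ => s ⊆ ⋃₀ c → ∃ t ∈ c, s ⊆ t) Γ₀ hfin
    (fun _ => ⟨hne.choose, hne.choose_spec, Set.empty_subset _⟩) ?_ hsub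
  intro a s _ _ ih hsub'
  obtain ⟨t, ht, hts⟩ := ih fun x hx => hsub' (Set.mem_insert_of_mem a hx)
  obtain ⟨u, hu, hau⟩ := hsub' (Set.mem_insert a s)
  rcases eq_or_ne t u with rfl | hne'
  · exact ⟨t, ht, Set.insert_subset hau hts⟩
  rcases hc ht hu hne' with h | h
  · exact ⟨u, hu, Set.insert_subset hau (hts.trans h)⟩
  · exact ⟨t, ht, Set.insert_subset (h hau) hts⟩

end

/-- (Compactness for Normal amst I, (1)⇔(2)) -/
theorem compact_iff_nontrivial_maxFinSat {M L : Type*} (R : M → Set L → Prop)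
    (hN : AmstNormal R) (hL : ¬ AmstFinSat R (Set.univ : Set L)) :
    AmstCompact R ↔
      ∀ Γ : Set L, AmstFinSat R Γ →
        ∃ S : Set L, Γ ⊆ S ∧ ¬ AmstTrivial R S ∧ AmstFinSat R S ∧
          ∀ Δ : Set L, S ⊂ Δ → ¬ AmstFinSat R Δ := by
  constructor
  · intro hC Γ hΓ
    -- Zorn's lemma to get a maximal finitely satisfiable extension
    obtain ⟨S, hΓS, hSmax⟩ := zorn_subset_nonempty {T : Set L | AmstFinSat R T}
      (fun c hcS hchain hcne => by
        refine ⟨⋃₀ c, ?_, fun s hs => Set.subset_sUnion_of_mem hs⟩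
        intro Γ₀ h₀ hfin
        obtain ⟨t, htc, ht⟩ := chain_finite_subset hchain hcne hfin h₀
        exact hcS htc _ ht hfin) Γ hΓ
    have hSfin : AmstFinSat R S := hSmax.prop
    -- S is satisfiable by compactness
    obtain ⟨m, hm⟩ := (hC S).mpr hSfin
    refine ⟨S, hΓS, ?_, hSfin, ?_⟩
    · intro htriv
      apply hL
      intro Γ₀ _ hfin
      refine ⟨m, (hN m Γ₀).mpr fun α _ => ?_⟩
      exact htriv α hm
    · intro Δ hΔ hΔfin
      exact (Set.ssubset_iff_of_subset hΔ.1).mp hΔ |>.elim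
        (fun x hx => hx.2 (hSmax.le_of_ge hΔfin hΔ.1 hx.1))
  · intro h Γ
    constructor
    · rintro ⟨m, hm⟩ Γ₀ h₀ _
      exact ⟨m, amst_sat_mono R hN hm h₀⟩
    · intro hΓ
      obtain ⟨S, hΓS, hnt, _, _⟩ := h Γ hΓ
      rw [AmstTrivial] at hnt
      push_neg at hnt
      obtain ⟨α, hα⟩ := hnt
      rw [AmstTurn, Set.not_subset] at hα
      obtain ⟨m, hm, _⟩ := hα
      exact ⟨m, amst_sat_mono R hN hm hΓS⟩
end

section
/- (Compactness for Normal amst I, (1)⇔(4)) Let (M, ⊨, P(L)) be a normal abstract model structure such that L is not finitely satisfiable. Then the amst is compact if and only if every finitely satisfiable set Γ ⊆ L is contained in a complete set. -/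
lemma amstSat_imp_finSat {M L : Type*} {R : M → Set L → Prop} (hN : AmstNormal R)
    {Γ : Set L} (h : AmstSat R Γ) : AmstFinSat R Γ := by
  obtain ⟨m, hm⟩ := h
  intro Γ₀ hsub _
  exact ⟨m, (hN m Γ₀).2 fun α hα => (hN m Γ).1 hm α (hsub hα)⟩

/-- (Compactness for Normal amst I, (1)⇔(4)) -/
theorem compact_iff_complete {M L : Type*} (R : M → Set L → Prop)
    (hN : AmstNormal R) (hL : ¬ AmstFinSat R (Set.univ : Set L)) :
    AmstCompact R ↔
      ∀ Γ : Set L, AmstFinSat R Γ →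
        ∃ S : Set L, Γ ⊆ S ∧ (AmstMod R S).Nonempty ∧
          ∀ α : L, AmstMod R S ⊆ AmstMod R {α} ∨
            AmstMod R S ⊆ (AmstMod R {α})ᶜ := by
  constructor
  · intro hC Γ hΓ
    -- Zorn: maximal finitely satisfiable extension of Γ
    have hzorn : ∀ c ⊆ {T : Set L | AmstFinSat R T}, IsChain (· ⊆ ·) c → c.Nonempty →
        ∃ ub ∈ {T : Set L | AmstFinSat R T}, ∀ s ∈ c, s ⊆ ub := by
      intro c hc hchain hcne
      refine ⟨⋃₀ c, ?_, fun s hs => Set.subset_sUnion_of_mem hs⟩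
      intro Γ₀ hsub hfin
      obtain ⟨t, htc, ht⟩ : ∃ t ∈ c, Γ₀ ⊆ t := by
        have hd : DirectedOn (fun i j : Set L => (id i : Set L) ⊆ id j) c :=
          hchain.directedOn
        obtain ⟨i, hic, hi⟩ := hd.exists_mem_subset_of_finset_subset_biUnion hcne
          (s := hfin.toFinset) (by
            rw [Set.Finite.coe_toFinset]
            intro x hx
            obtain ⟨t, htc, hxt⟩ := hsub hx
            exact Set.mem_biUnion htc hxt)
        exact ⟨i, hic, by simpa [Set.Finite.coe_toFinset] using hi⟩
      exact hc htc Γ₀ ht hfin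
    obtain ⟨S, hΓS, hSmem, hSmax⟩ :=
      zorn_subset_nonempty {T : Set L | AmstFinSat R T} hzorn Γ hΓ
    obtain ⟨u, hu⟩ := (hC S).2 hSmem
    -- key: if some model of S satisfies α then α ∈ S
    have key : ∀ α : L, ∀ m ∈ AmstMod R S, R m {α} → α ∈ S := by
      intro α m hm hmα
      have hsat : AmstSat R (S ∪ {α}) :=
        ⟨m, (hN m _).2 fun β hβ => by
          rcases hβ with hβ | hβ
          · exact (hN m S).1 hm β hβ
          · simp only [Set.mem_singleton_iff] at hβ; subst hβ; exact hmα⟩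
      have : S ∪ {α} ⊆ S := hSmax (amstSat_imp_finSat hN hsat) Set.subset_union_left
      exact this (Or.inr rfl)
    refine ⟨S, hΓS, ⟨u, hu⟩, fun α => ?_⟩
    by_cases hall : ∀ m ∈ AmstMod R S, R m {α}
    · exact Or.inl fun m hm => hall m hm
    · push_neg at hall
      obtain ⟨m, hm, hmα⟩ := hall
      refine Or.inr fun m' hm' hm'α => ?_
      exact hmα ((hN m S).1 hm α (key α m' hm' hm'α))
  · intro h Γ
    constructor
    · exact amstSat_imp_finSat hN
    · intro hΓ
      obtain ⟨S, hΓS, ⟨u, hu⟩, _⟩ := h Γ hΓ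
      exact ⟨u, (hN u Γ).2 fun α hα => (hN u S).1 hu α (hΓS hα)⟩
end

section
/- (Compactness for Normal amst I, (1)⇔(5)) Let (M, ⊨, P(L)) be a normal abstract model structure such that L is not finitely satisfiable, with induced consequence relation ⊢. Then the amst is compact if and only if every ⊢-trivial set Γ ⊆ L has a finite ⊢-trivial subset. -/
/-- (Compactness for Normal amst I, (1)⇔(5)) -/
theorem compact_iff_trivial_finite_subset {M L : Type*} (R : M → Set L → Prop)
    (hN : AmstNormal R) (hL : ¬ AmstFinSat R (Set.univ : Set L)) :
    AmstCompact R ↔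
      ∀ Γ : Set L, AmstTrivial R Γ →
        ∃ Γ₀ : Set L, Γ₀ ⊆ Γ ∧ Γ₀.Finite ∧ AmstTrivial R Γ₀ := by

  -- helper: no model satisfies every singleton
  have key : ∀ m : M, (∀ α : L, R m {α}) → False := by
    intro m h
    exact hL (fun Γ₀ _ _ => ⟨m, (hN m Γ₀).mpr (fun α _ => h α)⟩)
  constructor
  · intro hC Γ hTriv
    -- Γ is unsatisfiable
    have hunsat : ¬ AmstSat R Γ := by
      rintro ⟨m, hm⟩
      exact key m (fun α => hTriv α hm)
    have hnfs : ¬ AmstFinSat R Γ := fun h => hunsat ((hC Γ).mpr h)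
    simp only [AmstFinSat, not_forall] at hnfs
    obtain ⟨Γ₀, hsub, hfin, hns⟩ := hnfs
    refine ⟨Γ₀, hsub, hfin, fun α m hm => absurd ⟨m, hm⟩ hns⟩
  · intro H Γ
    constructor
    · rintro ⟨m, hm⟩ Γ₀ hsub hfin
      exact ⟨m, (hN m Γ₀).mpr (fun α hα => (hN m Γ).mp hm α (hsub hα))⟩
    · intro hfs
      by_contra hns
      have hTriv : AmstTrivial R Γ := fun α m hm => absurd ⟨m, hm⟩ hns
      obtain ⟨Γ₀, hsub, hfin, hT₀⟩ := H Γ hTriv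
      obtain ⟨m, hm⟩ := hfs Γ₀ hsub hfin
      exact key m (fun α => hT₀ α hm)
end

section
/- Let (M₁, ⊨₁, P(L)) and (M₂, ⊨₂, P(L)) be two normal abstract model structures over the same set L such that L is not satisfiable in either of them, with induced consequence relations ⊢₁ and ⊢₂ respectively. If (M₁, ⊨₁, P(L)) is compact and ⊢₁ = ⊢₂, then (M₂, ⊨₂, P(L)) is compact as well. -/
lemma amst_sat_iff_not_trivial {M L : Type*} (R : M → Set L → Prop)
    (h : AmstNormal R) (hL : ¬ AmstSat R (Set.univ : Set L)) (Γ : Set L) :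
    AmstSat R Γ ↔ ¬ AmstTrivial R Γ := by
  constructor
  · rintro ⟨m, hm⟩ htriv
    exact hL ⟨m, (h m Set.univ).mpr (fun α _ => htriv α hm)⟩
  · intro hnt
    by_contra hns
    exact hnt (fun α m hm => absurd ⟨m, hm⟩ hns)

/-- Compactness transfers between normal amsts (with `L` unsatisfiable) inducing the
same consequence relation. -/
theorem compact_transfers {M₁ M₂ L : Type*}
    (R₁ : M₁ → Set L → Prop) (R₂ : M₂ → Set L → Prop)
    (h₁ : AmstNormal R₁) (h₂ : AmstNormal R₂)
    (hL₁ : ¬ AmstSat R₁ (Set.univ : Set L)) (hL₂ : ¬ AmstSat R₂ (Set.univ : Set L))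
    (hc : AmstCompact R₁)
    (heq : ∀ (Γ : Set L) (α : L), AmstTurn R₁ Γ α ↔ AmstTurn R₂ Γ α) :
    AmstCompact R₂ := by
  have key : ∀ Γ : Set L, AmstSat R₂ Γ ↔ AmstSat R₁ Γ := by
    intro Γ
    rw [amst_sat_iff_not_trivial R₂ h₂ hL₂, amst_sat_iff_not_trivial R₁ h₁ hL₁]
    exact not_congr (forall_congr' (fun α => (heq Γ α).symm))
  intro Γ
  constructor
  · rintro ⟨m, hm⟩ Γ₀ hsub _
    exact ⟨m, (h₂ m Γ₀).mpr (fun α hα => (h₂ m Γ).mp hm α (hsub hα))⟩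
  · intro hfs
    rw [key]
    rw [hc Γ]
    intro Γ₀ hsub hfin
    rw [← key]
    exact hfs Γ₀ hsub hfin
end

section
/- Let (M, ⊨, P(L)) be a normal abstract model structure whose induced consequence relation ⊢ makes (L, ⊢) a finitary logical structure. If L is not finitely satisfiable, then the amst is compact. -/
/-- A normal amst whose induced consequence relation is finitary, with `L` not
finitely satisfiable, is compact. -/
theorem finitary_normal_compact {M L : Type*} (R : M → Set L → Prop)
    (hN : AmstNormal R)
    (hfin : ∀ (Γ : Set L) (α : L), AmstTurn R Γ α →
      ∃ Γ₀ : Set L, Γ₀ ⊆ Γ ∧ Γ₀.Finite ∧ AmstTurn R Γ₀ α)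
    (hL : ¬ AmstFinSat R (Set.univ : Set L)) :
    AmstCompact R := by
  intro Γ
  constructor
  · rintro ⟨m, hm⟩ Δ hΔ _
    exact ⟨m, (hN m Δ).2 fun α hα => (hN m Γ).1 hm α (hΔ hα)⟩
  · intro hFS
    by_contra hns
    -- Mod Γ = ∅, so Γ ⊢ α for all α
    have htriv : ∀ α : L, AmstTurn R Γ α := by
      intro α m hm
      exact absurd ⟨m, hm⟩ hns
    -- get a finite unsatisfiable set Γ₀
    unfold AmstFinSat at hL
    push_neg at hL
    obtain ⟨Γ₀, -, hΓ₀fin, hΓ₀unsat⟩ := hL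
    -- choose finite subsets
    choose f hfsub hffin hfturn using fun α : L => hfin Γ α (htriv α)
    set F : Set L := ⋃ α ∈ Γ₀, f α with hF
    have hFfin : F.Finite := hΓ₀fin.biUnion fun α _ => hffin α
    have hFsub : F ⊆ Γ := by
      intro x hx
      simp only [hF, Set.mem_iUnion] at hx
      obtain ⟨α, -, hx⟩ := hx
      exact hfsub α hx
    obtain ⟨m, hm⟩ := hFS F hFsub hFfin
    apply hΓ₀unsat
    refine ⟨m, (hN m Γ₀).2 fun α hα => ?_⟩
    have : R m (f α) := (hN m (f α)).2 fun β hβ => (hN m F).1 hm β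
      (Set.mem_biUnion hα hβ)
    exact hfturn α this
end

section
/- (Compactness for Normal amst II) Let (M, ⊨, P(L)) be a normal abstract model structure such that L is not satisfiable, and let τ_N be the topology on M generated by the collection {M \ Mod({α}) | α ∈ L} as a subbase. Then the amst is compact if and only if the topological space (M, τ_N) is compact. -/
/-- (Compactness for Normal amst II) A normal amst with `L` unsatisfiable is compact
iff the topological space `(M, τ_N)` is compact. -/
theorem compact_iff_topological_compact {M L : Type*} (R : M → Set L → Prop)
    (hN : AmstNormal R) (hL : ¬ AmstSat R (Set.univ : Set L)) :
    AmstCompact R ↔ @CompactSpace M (tauN R) := by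
  letI t : TopologicalSpace M := tauN R
  constructor
  · intro hC
    refine ⟨?_⟩
    rw [isCompact_iff_ultrafilter_le_nhds]
    intro 𝒰 _
    set Γ : Set L := {α | AmstMod R {α} ∈ 𝒰} with hΓ
    have hfs : AmstFinSat R Γ := by
      intro Γ₀ hsub hfin
      have hmem : (⋂ α ∈ Γ₀, AmstMod R {α}) ∈ 𝒰 :=
        (Filter.biInter_mem hfin).2 fun α hα => hsub hα
      obtain ⟨m, hm⟩ := 𝒰.nonempty_of_mem hmem
      exact ⟨m, (hN m Γ₀).2 fun α hα => by
        have := Set.mem_iInter₂.1 hm α hα; exact this⟩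
    obtain ⟨u, hu⟩ := (hC Γ).2 hfs
    refine ⟨u, trivial, ?_⟩
    have key : ∀ V : Set M, t.IsOpen V → u ∈ V → V ∈ 𝒰 := by
      intro V hV
      induction hV with
      | basic s hs =>
        intro hus
        obtain ⟨α, rfl⟩ := hs
        have hα : α ∉ Γ := fun h => hus ((hN u Γ).1 hu α h)
        exact (Ultrafilter.compl_mem_iff_notMem).2 hα
      | univ => exact fun _ => Filter.univ_mem
      | inter s s' _ _ ihs ihs' =>
        exact fun hu => Filter.inter_mem (ihs hu.1) (ihs' hu.2)
      | sUnion S hS ih =>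
        intro hu
        obtain ⟨s, hsS, hus⟩ := hu
        exact Filter.mem_of_superset (ih s hsS hus) (Set.subset_sUnion_of_mem hsS)
    exact le_nhds_iff.mpr fun s hus hs => key s hs hus
  · intro hCS Γ
    constructor
    · rintro ⟨m, hm⟩ Γ₀ hsub _
      exact ⟨m, (hN m Γ₀).2 fun α hα => (hN m Γ).1 hm α (hsub hα)⟩
    · intro hfs
      by_contra hns
      have hcl : ∀ α : Γ, IsClosed (AmstMod R {(α : L)}) := fun α =>
        ⟨TopologicalSpace.GenerateOpen.basic _ ⟨α, rfl⟩⟩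
      have hempty : (Set.univ : Set M) ∩ ⋂ α : Γ, AmstMod R {(α : L)} = ∅ := by
        ext m
        simp only [Set.mem_inter_iff, Set.mem_iInter, Set.mem_empty_iff_false,
          Set.mem_univ, true_and, iff_false]
        intro hm
        exact hns ⟨m, (hN m Γ).2 fun α hα => hm ⟨α, hα⟩⟩
      obtain ⟨s, hs⟩ := hCS.isCompact_univ.elim_finite_subfamily_closed _ hcl hempty
      have hΓ₀ : AmstSat R (Subtype.val '' (s : Set Γ)) :=
        hfs _ (by rintro α ⟨β, _, rfl⟩; exact β.2) (s.finite_toSet.image _)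
      obtain ⟨m, hm⟩ := hΓ₀
      have : m ∈ (Set.univ : Set M) ∩ ⋂ α ∈ s, AmstMod R {(α : L)} := by
        refine ⟨trivial, Set.mem_iInter₂.2 fun α hα => ?_⟩
        exact (hN m _).1 hm α ⟨α, hα, rfl⟩
      rw [hs] at this
      exact this
end

section
/- Let (M, ⊨, P(L)) be a normal abstract model structure, τ_N the topology on M generated by the subbase {M \ Mod({α}) | α ∈ L}, (m_i)_{i∈I} a sequence in M, 𝒰 an ultrafilter on I, and u ∈ M. Then u is a 𝒰-ultramodel of (m_i)_{i∈I} in (M, τ_N) if and only if for every Σ ⊆ L, {i ∈ I | m_i ⊨ Σ} ∈ 𝒰 implies u ⊨ Σ. -/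
/-- `u` is a `𝒰`-ultramodel of `(m_i)` in `(M, τ_N)` iff for every `Σ ⊆ L`,
`{i | m_i ⊨ Σ} ∈ 𝒰` implies `u ⊨ Σ`. -/
theorem ultramodel_tauN_iff {M L I : Type*} (R : M → Set L → Prop)
    (hN : AmstNormal R) (m : I → M) (𝒰 : Ultrafilter I) (u : M) :
    Ultramodel (tauN R) m 𝒰 u ↔
      ∀ S : Set L, {i : I | R (m i) S} ∈ 𝒰 → R u S := by
  constructor
  · intro hu S hS
    rw [hN]
    intro α hα
    by_contra hc
    have hopen : (tauN R).IsOpen (AmstMod R {α})ᶜ :=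
      TopologicalSpace.isOpen_generateFrom_of_mem ⟨α, rfl⟩
    have h1 := hu _ hopen hc
    have h2 : {i : I | R (m i) S} ⊆ {i : I | R (m i) {α}} := by
      intro i hi
      exact ((hN (m i) S).mp hi) α hα
    have := 𝒰.toFilter.inter_sets (𝒰.toFilter.mem_of_superset hS h2) h1
    rcases Filter.nonempty_of_mem this with ⟨i, hi1, hi2⟩
    exact hi2 hi1
  · intro h V hV huV
    induction hV with
    | basic V hVb =>
      obtain ⟨α, rfl⟩ := hVb
      by_contra hc
      have : {i : I | R (m i) {α}} ∈ 𝒰 := by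
        have := (𝒰.compl_mem_iff_notMem (s := {i : I | m i ∈ (AmstMod R {α})ᶜ})).mpr hc
        simpa [AmstMod, Set.compl_setOf] using this
      exact huV (h _ this)
    | univ => exact Filter.univ_mem
    | inter V W _ _ ihV ihW =>
      exact Filter.inter_mem (ihV huV.1) (ihW huV.2)
    | sUnion S _ ih =>
      obtain ⟨t, htS, hut⟩ := huV
      exact Filter.mem_of_superset (ih t htS hut) fun i hi => ⟨t, htS, hi⟩
end

section
/- (Compactness for Normal amst III) Let (M, ⊨, P(L)) be a normal abstract model structure and τ_N the topology on M generated by the subbase {M \ Mod({α}) | α ∈ L}. For Σ ⊆ L let FinSet(Σ) denote the set of all finite subsets of Σ. Then the amst is compact if and only if for every finitely satisfiable Σ ⊆ L, every ultrafilter 𝒰 on FinSet(Σ), and every sequence (m_{Σ₀})_{Σ₀ ∈ FinSet(Σ)} in M, the sequence has a 𝒰-ultramodel in (M, τ_N) (i.e., it 𝒰-converges in (M, τ_N)). -/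
/-- (Compactness for Normal amst III) A normal amst is compact iff for every finitely
satisfiable `Σ ⊆ L`, every ultrafilter `𝒰` on `FinSet(Σ)` and every sequence of models
indexed by `FinSet(Σ)`, the sequence has a `𝒰`-ultramodel in `(M, τ_N)`. -/
theorem compact_iff_ultramodels_exist {M L : Type*} (R : M → Set L → Prop)
    (hN : AmstNormal R) :
    AmstCompact R ↔
      ∀ S : Set L, AmstFinSat R S →
        ∀ (𝒰 : Ultrafilter {G : Set L // G ⊆ S ∧ G.Finite})
          (m : {G : Set L // G ⊆ S ∧ G.Finite} → M),
          ∃ u : M, Ultramodel (tauN R) m 𝒰 u := by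
  constructor
  · -- compactness implies every such ultrafilter sequence has an ultramodel
    intro hc S hfs 𝒰 m
    set Γ : Set L := {α | {i | R (m i) {α}} ∈ 𝒰} with hΓ
    have hfin : AmstFinSat R Γ := by
      intro Γ₀ hsub hfinite
      have hmem : (⋂ α ∈ Γ₀, {i | R (m i) {α}}) ∈ 𝒰 :=
        (Filter.biInter_mem hfinite).mpr (fun α hα => hsub hα)
      obtain ⟨i, hi⟩ := Filter.nonempty_of_mem hmem
      refine ⟨m i, (hN (m i) Γ₀).mpr fun α hα => ?_⟩
      simpa using Set.mem_iInter₂.mp hi α hα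
    obtain ⟨u, hu⟩ := (hc Γ).mpr hfin
    refine ⟨u, ?_⟩
    intro V hV
    induction hV with
    | basic V hVb =>
      obtain ⟨α, rfl⟩ := hVb
      intro huV
      have hα : α ∉ Γ := fun hα => huV ((hN u Γ).mp hu α hα)
      have : {i | R (m i) {α}} ∉ 𝒰 := hα
      have := (Ultrafilter.compl_mem_iff_notMem).mpr this
      exact this
    | univ => intro _; exact Filter.univ_mem
    | inter V W hV hW ihV ihW =>
      intro huV
      exact Filter.inter_mem (ihV huV.1) (ihW huV.2)
    | sUnion T hT ih =>
      intro huV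
      obtain ⟨V, hVT, huV⟩ := huV
      exact Filter.mem_of_superset (ih V hVT huV) (fun i hi => ⟨V, hVT, hi⟩)
  · intro h Γ
    constructor
    · intro hsat Γ₀ hsub hfinite
      obtain ⟨n, hn⟩ := hsat
      exact ⟨n, (hN n Γ₀).mpr fun α hα => (hN n Γ).mp hn α (hsub hα)⟩
    · intro hfs
      have hne : Nonempty {G : Set L // G ⊆ Γ ∧ G.Finite} :=
        ⟨⟨∅, by simp, Set.finite_empty⟩⟩
      set F : Filter {G : Set L // G ⊆ Γ ∧ G.Finite} :=
        ⨅ i : {G : Set L // G ⊆ Γ ∧ G.Finite}, Filter.principal {j | i.1 ⊆ j.1} with hFdef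
      haveI hF : F.NeBot := by
        refine Filter.iInf_neBot_of_directed ?_ ?_
        · intro a b
          refine ⟨⟨a.1 ∪ b.1, Set.union_subset a.2.1 b.2.1, a.2.2.union b.2.2⟩, ?_, ?_⟩
          · exact Filter.principal_mono.mpr
              (fun j hj => Set.Subset.trans Set.subset_union_left hj)
          · exact Filter.principal_mono.mpr
              (fun j hj => Set.Subset.trans Set.subset_union_right hj)
        · exact fun i => Filter.principal_neBot_iff.mpr ⟨i, Set.Subset.rfl⟩
      set 𝒰 := Ultrafilter.of F with h𝒰
      choose mm hmm using fun j : {G : Set L // G ⊆ Γ ∧ G.Finite} => hfs j.1 j.2.1 j.2.2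
      obtain ⟨u, hu⟩ := h Γ hfs 𝒰 mm
      refine ⟨u, (hN u Γ).mpr fun α hα => ?_⟩
      by_contra hcon
      have hopen : (tauN R).IsOpen (AmstMod R {α})ᶜ :=
        TopologicalSpace.GenerateOpen.basic _ ⟨α, rfl⟩
      have hA := hu _ hopen hcon
      have hB : {j : {G : Set L // G ⊆ Γ ∧ G.Finite} | ({α} : Set L) ⊆ j.1} ∈ 𝒰 := by
        have hFB : ({j : {G : Set L // G ⊆ Γ ∧ G.Finite} |
            (⟨{α}, by simpa using hα, Set.finite_singleton α⟩ :
              {G : Set L // G ⊆ Γ ∧ G.Finite}).1 ⊆ j.1}) ∈ F :=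
          Filter.mem_iInf_of_mem _ (Filter.mem_principal_self _)
        exact Ultrafilter.of_le F hFB
      obtain ⟨j, hj1, hj2⟩ := Filter.nonempty_of_mem (Filter.inter_mem hA hB)
      exact hj1 ((hN (mm j) j.1).mp (hmm j) α (hj2 rfl))
end

section
/- (Generalized Łoś's Theorem) Let (M, ⊨, P(L)) be a normal abstract model structure, τ_N the topology on M generated by the subbase {M \ Mod({α}) | α ∈ L}, and τ_C the topology on M generated by the collection {Mod(Γ) | Γ ⊆ L}. Let (m_i)_{i∈I} be a sequence in M, 𝒰 an ultrafilter on I, and u ∈ M. Then u is a 𝒰-ultramodel of (m_i)_{i∈I} in both (M, τ_N) and (M, τ_C) if and only if for every Σ ⊆ L: u ⊨ Σ iff {i ∈ I | m_i ⊨ Σ} ∈ 𝒰. -/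

lemma ultramodel_of_subbase {M I : Type*} {S : Set (Set M)} {m : I → M}
    {𝒰 : Ultrafilter I} {u : M}
    (h : ∀ U ∈ S, u ∈ U → {i | m i ∈ U} ∈ 𝒰) :
    Ultramodel (TopologicalSpace.generateFrom S) m 𝒰 u := by
  intro V hV
  induction hV with
  | basic U hU => exact h U hU
  | univ => intro _; exact Filter.univ_mem
  | inter U V _ _ ihU ihV =>
      intro hu
      exact Filter.inter_mem (ihU hu.1) (ihV hu.2)
  | sUnion K _ ih =>
      rintro ⟨U, hU, hu⟩
      exact Filter.mem_of_superset (ih U hU hu) (fun i hi => ⟨U, hU, hi⟩)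


/-- (Generalized Łoś's Theorem) `u` is a `𝒰`-ultramodel of `(m_i)` in both `(M, τ_N)`
and `(M, τ_C)` iff for all `Σ ⊆ L`: `u ⊨ Σ` iff `{i | m_i ⊨ Σ} ∈ 𝒰`. -/
theorem generalized_los {M L I : Type*} (R : M → Set L → Prop)
    (hN : AmstNormal R) (m : I → M) (𝒰 : Ultrafilter I) (u : M) :
    (Ultramodel (tauN R) m 𝒰 u ∧ Ultramodel (tauC R) m 𝒰 u) ↔
      ∀ S : Set L, R u S ↔ {i : I | R (m i) S} ∈ 𝒰 := by
  constructor
  · rintro ⟨hn, hc⟩ S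
    constructor
    · intro hu
      exact hc (AmstMod R S) (TopologicalSpace.GenerateOpen.basic _ ⟨S, rfl⟩) hu
    · intro hm
      by_contra hu
      obtain ⟨α, hαS, hα⟩ : ∃ α ∈ S, ¬ R u {α} := by
        by_contra h; push_neg at h; exact hu ((hN u S).2 h)
      have h1 : {i | m i ∈ (AmstMod R {α})ᶜ} ∈ 𝒰 :=
        hn (AmstMod R {α})ᶜ (TopologicalSpace.GenerateOpen.basic _ ⟨α, rfl⟩) hα
      obtain ⟨i, hiS, hiα⟩ := Filter.nonempty_of_mem (Filter.inter_mem hm h1)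
      exact hiα (((hN (m i) S).1 hiS) α hαS)
  · intro h
    constructor
    · apply ultramodel_of_subbase
      rintro U ⟨α, rfl⟩ hu
      have h2 : {i | R (m i) ({α} : Set L)} ∉ 𝒰 := fun hh => hu ((h {α}).2 hh)
      exact Ultrafilter.compl_mem_iff_notMem.2 h2
    · apply ultramodel_of_subbase
      rintro U ⟨Γ, rfl⟩ hu
      exact (h Γ).1 hu
end
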